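/- Let λ_1,…,λ_d > 0 and let Λ_N = ∏_{k=1}^d [-N_k, N_k] ∩ Z^d. Define φ = Σ_{x∈Λ_N} ξ_{{x}} (the one-particle vector with all coefficients 1). Then ⟨φ, H_{Λ_N^{(1)}} φ⟩ / ‖φ‖² ≤ Σ_{k: λ_k≠1} (1-λ_k)²/(1+λ_k²) + Σ_{k=1}^d 1/(2N_k+1), where Λ_N^{(1)} is the enlargement of Λ_N by one lattice step and H is the one-species PVBS Hamiltonian. -/

import Mathlib

/-!
On a one-particle vector `φ = ∑ₓ cₓ ξ_{x}` the bond term `h_{x,x+e_k}` acts as the projection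
onto `φ̂_k`, so `⟨φ, Hφ⟩ = ∑_{bonds} |c_{x+e_k} - λ_k cₓ|² / (1 + λ_k²)`. For `c` the indicator of
`Λ_N` inside `Λ_N^{(1)}` the bond sum in direction `k` factorises over the coordinates: along
the `k`-th axis the `2N_k` interior bonds give `(1 - λ_k)²` each and the two boundary bonds give
`1` and `λ_k²`, while every other axis contributes `2N_j + 1`. Dividing by
`‖φ‖² = ∏_j (2N_j + 1)` gives exactly
`∑_k ((1 - λ_k)² / (1 + λ_k²) · 2N_k / (2N_k + 1) + 1 / (2N_k + 1))`,
and `2N_k / (2N_k + 1) ≤ 1`.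
-/

open scoped BigOperators

noncomputable section

abbrev Site (d : ℕ) := Fin d → ℤ

def unitVec (d : ℕ) (k : Fin d) : Site d := fun j => if j = k then 1 else 0

abbrev Cfg {d : ℕ} (Λ : Finset (Site d)) := (↑Λ : Type) → Bool

abbrev HSp {d : ℕ} (Λ : Finset (Site d)) := EuclideanSpace ℂ (Cfg Λ)

/-- One-particle basis vector with the particle at site `x`. -/
def ksi {d : ℕ} {Λ : Finset (Site d)} (x : ↑Λ) : HSp Λ :=
  WithLp.toLp 2 (fun σ => if σ = (fun (y : ↑Λ) => decide ((y : Site d) = (x : Site d))) then 1 else 0)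

/-- The all-zero (vacuum) product vector. -/
def vac {d : ℕ} (Λ : Finset (Site d)) : HSp Λ :=
  WithLp.toLp 2 (fun σ => if σ = (fun _ => false) then 1 else 0)

/-- The PVBS nearest-neighbor interaction `|11><11| + |φ̂><φ̂|` acting on the bond `(x, y)`. -/
def hop {d : ℕ} {Λ : Finset (Site d)} (lam : ℝ) (x y : ↑Λ) (ψ : HSp Λ) : HSp Λ :=
  WithLp.toLp 2 fun σ =>
    (if σ x = true ∧ σ y = true then ψ σ else 0) +
    (if σ x = false ∧ σ y = true then
        (ψ (Function.update (Function.update σ x false) y true)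
          - (lam : ℂ) * ψ (Function.update (Function.update σ x true) y false)) / (1 + (lam : ℂ)^2)
     else if σ x = true ∧ σ y = false then
        -(lam : ℂ) * ((ψ (Function.update (Function.update σ x false) y true)
          - (lam : ℂ) * ψ (Function.update (Function.update σ x true) y false)) / (1 + (lam : ℂ)^2))
     else 0)

/-- The PVBS Hamiltonian on `Λ`: sum of the bond interactions over all nearest-neighbor
bonds `(x, x + e_k)` contained in `Λ`. -/
def Ham {d : ℕ} (Λ : Finset (Site d)) (lam : Fin d → ℝ) (ψ : HSp Λ) : HSp Λ :=
  WithLp.toLp 2 fun σ => ∑ k : Fin d, ∑ x : ↑Λ,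
    (if h : ((x : Site d) + unitVec d k) ∈ Λ then
        hop (lam k) x ⟨(x : Site d) + unitVec d k, h⟩ ψ σ else 0)

/-- `λ^x = ∏_k λ_k^{x_k}`. -/
def lamPow {d : ℕ} (lam : Fin d → ℝ) (x : Site d) : ℝ := ∏ k, (lam k) ^ (x k)

/-- `C(Λ) = ∑_{x∈Λ} λ^{2x}`. -/
def CC {d : ℕ} (lam : Fin d → ℝ) (Λ : Finset (Site d)) : ℝ := ∑ x ∈ Λ, (lamPow lam x)^2

/-- The normalized one-particle ground state vector. -/
def psi1 {d : ℕ} (Λ : Finset (Site d)) (lam : Fin d → ℝ) : HSp Λ :=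
  WithLp.toLp 2 fun σ => (Real.sqrt (CC lam Λ) : ℂ)⁻¹ * ∑ x : ↑Λ, ((lamPow lam x : ℝ) : ℂ) * ksi x σ

def Adj {d : ℕ} (x y : Site d) : Prop := ∃ k, y = x + unitVec d k ∨ x = y + unitVec d k

/-- `Λ` is connected in the nearest-neighbor graph of `ℤ^d`. -/
def ConnectedIn {d : ℕ} (Λ : Finset (Site d)) : Prop :=
  ∀ x ∈ Λ, ∀ y ∈ Λ, Relation.ReflTransGen (fun u v => v ∈ Λ ∧ Adj u v) x y

/-- The box `∏_k [−N_k, N_k] ∩ ℤ^d`. -/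
def box {d : ℕ} (N : Fin d → ℕ) : Finset (Site d) :=
  Fintype.piFinset (fun k => Finset.Icc (-(N k : ℤ)) (N k))

/-- The one-particle trial vector with all coefficients `1` on the box `Λ_N`, viewed inside
the enlarged box `Λ_N^{(1)}`. -/
def boxTrial {d : ℕ} (N : Fin d → ℕ) : HSp (box (fun k => N k + 1)) :=
  WithLp.toLp 2 fun σ => ∑ x : ↑(box (fun k => N k + 1)),
    (if (x : Site d) ∈ box N then (1 : ℂ) else 0) * ksi x σ

lemma Finset.sum_piFinset_mul_prod_erase {ι α R : Type*} [Fintype ι] [DecidableEq ι]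
    [CommSemiring R] (s : ι → Finset α) (k : ι) (f : α → R) (g : ι → α → R) :
    ∑ x ∈ Fintype.piFinset s, f (x k) * ∏ j ∈ Finset.univ.erase k, g j (x j) =
      (∑ t ∈ s k, f t) * ∏ j ∈ Finset.univ.erase k, ∑ t ∈ s j, g j t := by
  calc ∑ x ∈ Fintype.piFinset s, f (x k) * ∏ j ∈ Finset.univ.erase k, g j (x j)
      = ∑ x ∈ Fintype.piFinset s, ∏ i, Function.update g k f i (x i) := by
        refine Finset.sum_congr rfl fun x _ => ?_
        rw [← Finset.mul_prod_erase _ _ (Finset.mem_univ k), Function.update_self]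
        congr 1
        exact Finset.prod_congr rfl fun j hj => by
          rw [Function.update_of_ne (Finset.ne_of_mem_erase hj)]
    _ = ∏ i, ∑ t ∈ s i, Function.update g k f i t := (Finset.prod_univ_sum s _).symm
    _ = _ := by
        rw [← Finset.mul_prod_erase _ _ (Finset.mem_univ k), Function.update_self]
        congr 1
        exact Finset.prod_congr rfl fun j hj => by
          rw [Function.update_of_ne (Finset.ne_of_mem_erase hj)]

section OneParticle

variable {d : ℕ} {Λ : Finset (Site d)}

def singleCfg (x : ↑Λ) : Cfg Λ := fun y => decide ((y : Site d) = (x : Site d))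

lemma ksi_apply (x : ↑Λ) (σ : Cfg Λ) : ksi x σ = if σ = singleCfg x then 1 else 0 := rfl

lemma singleCfg_apply (x y : ↑Λ) : singleCfg x y = decide (y = x) :=
  decide_eq_decide.mpr Subtype.coe_inj

lemma singleCfg_injective : Function.Injective (singleCfg (Λ := Λ)) := by
  intro x z h
  simpa [singleCfg_apply] using congrFun h x

def oneParticle (Λ : Finset (Site d)) (c : Site d → ℂ) : HSp Λ :=
  WithLp.toLp 2 fun σ => ∑ x : ↑Λ, c x * ksi x σ

lemma oneParticle_apply_singleCfg (c : Site d → ℂ) (z : ↑Λ) :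
    oneParticle Λ c (singleCfg z) = c z := by
  rw [oneParticle, PiLp.toLp_apply, Fintype.sum_eq_single z]
  · simp [ksi_apply]
  · intro x hx
    simp [ksi_apply, singleCfg_injective.ne hx.symm]

lemma inner_oneParticle_left (c : Site d → ℂ) (v : HSp Λ) :
    inner ℂ (oneParticle Λ c) v = ∑ z : ↑Λ, starRingEnd ℂ (c z) * v (singleCfg z) := by
  simp only [PiLp.inner_apply, RCLike.inner_apply', oneParticle, map_sum, Finset.sum_mul]
  rw [Finset.sum_comm]
  refine Finset.sum_congr rfl fun x _ => ?_
  rw [Fintype.sum_eq_single (singleCfg x)]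
  · simp [ksi_apply]
  · intro σ hσ
    simp [ksi_apply, hσ]

lemma norm_oneParticle_sq (c : Site d → ℂ) :
    ‖oneParticle Λ c‖ ^ 2 = ∑ x ∈ Λ, ‖c x‖ ^ 2 := by
  have h := inner_oneParticle_left c (oneParticle Λ c)
  simp only [oneParticle_apply_singleCfg, Complex.conj_mul', inner_self_eq_norm_sq_to_K] at h
  rw [← Finset.sum_coe_sort Λ]
  exact Complex.ofReal_injective (by push_cast; exact h)

lemma update_update_singleCfg {x y z : ↑Λ} (hxy : x ≠ y) (hz : z = x ∨ z = y) (a : Bool) :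
    Function.update (Function.update (singleCfg z) x a) y (!a) =
      singleCfg (if a then x else y) := by
  funext w
  rcases hz with hz | hz <;> by_cases hwx : w = x <;> by_cases hwy : w = y <;>
    cases a <;> simp_all [singleCfg_apply]

lemma hop_apply_singleCfg (lam : ℝ) {x y : ↑Λ} (hxy : x ≠ y) (ψ : HSp Λ) (z : ↑Λ) :
    hop lam x y ψ (singleCfg z) =
      if z = y then (ψ (singleCfg y) - lam * ψ (singleCfg x)) / (1 + (lam : ℂ) ^ 2)
      else if z = x then -lam * ((ψ (singleCfg y) - lam * ψ (singleCfg x)) / (1 + (lam : ℂ) ^ 2))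
      else 0 := by
  by_cases hzxy : z = x ∨ z = y
  · have hfalse := update_update_singleCfg hxy hzxy false
    have htrue := update_update_singleCfg hxy hzxy true
    simp only [Bool.not_false, Bool.not_true, Bool.false_eq_true, if_true, if_false] at hfalse htrue
    rcases hzxy with hz | hz <;> subst hz <;>
      simp [hop, hfalse, htrue, singleCfg_apply, hxy, hxy.symm]
  · push Not at hzxy
    simp [hop, singleCfg_apply, hzxy.1, hzxy.2, Ne.symm hzxy.1, Ne.symm hzxy.2]

lemma inner_oneParticle_hop (lam : ℝ) {x y : ↑Λ} (hxy : x ≠ y) (c : Site d → ℂ) :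
    inner ℂ (oneParticle Λ c) (hop lam x y (oneParticle Λ c)) =
      ((‖c y - lam * c x‖ ^ 2 / (1 + lam ^ 2) : ℝ) : ℂ) := by
  rw [inner_oneParticle_left, Fintype.sum_eq_add y x hxy.symm]
  · simp only [hop_apply_singleCfg lam hxy, oneParticle_apply_singleCfg, if_pos, if_neg hxy]
    rw [Complex.ofReal_div, Complex.ofReal_pow, ← Complex.conj_mul', map_sub, map_mul,
      Complex.conj_ofReal]
    push_cast
    ring
  · rintro z ⟨hzy, hzx⟩
    simp [hop_apply_singleCfg lam hxy, hzy, hzx]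

end OneParticle

section Energy

variable {d : ℕ}

lemma add_unitVec_ne_self (x : Site d) (k : Fin d) : x + unitVec d k ≠ x := by
  intro h
  simpa [unitVec] using congrFun h k

lemma inner_oneParticle_Ham (Λ : Finset (Site d)) (lam : Fin d → ℝ) (c : Site d → ℂ) :
    inner ℂ (oneParticle Λ c) (Ham Λ lam (oneParticle Λ c)) =
      ((∑ k, ∑ x ∈ Λ, if x + unitVec d k ∈ Λ then
          ‖c (x + unitVec d k) - lam k * c x‖ ^ 2 / (1 + lam k ^ 2) else 0 : ℝ) : ℂ) := by
  rw [inner_oneParticle_left]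
  simp only [Ham, PiLp.toLp_apply, Finset.mul_sum]
  rw [Finset.sum_comm]
  push_cast
  refine Finset.sum_congr rfl fun k _ => ?_
  rw [Finset.sum_comm, ← Finset.sum_coe_sort Λ]
  refine Finset.sum_congr rfl fun x _ => ?_
  split_ifs with h
  · have hxy : x ≠ ⟨x + unitVec d k, h⟩ := fun he =>
      add_unitVec_ne_self (x : Site d) k (congrArg Subtype.val he).symm
    rw [← inner_oneParticle_left, inner_oneParticle_hop _ hxy]
  · simp

end Energy

section Box

variable {d : ℕ}

def intervalInd (n : ℕ) (t : ℤ) : ℝ := if t ∈ Finset.Icc (-(n : ℤ)) n then 1 else 0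

lemma intervalInd_sq (n : ℕ) (t : ℤ) : intervalInd n t ^ 2 = intervalInd n t := by
  unfold intervalInd; split_ifs <;> norm_num

lemma sum_intervalInd (n : ℕ) :
    ∑ t ∈ Finset.Icc (-((n + 1 : ℕ) : ℤ)) ((n + 1 : ℕ) : ℤ), intervalInd n t = 2 * n + 1 := by
  have hsub : Finset.Icc (-(n : ℤ)) n ⊆ Finset.Icc (-((n + 1 : ℕ) : ℤ)) ((n + 1 : ℕ) : ℤ) :=
    Finset.Icc_subset_Icc (by omega) (by omega)
  simp only [intervalInd]
  rw [← Finset.sum_filter, Finset.filter_mem_eq_inter,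
    Finset.inter_eq_right.mpr hsub, Finset.sum_const, Int.card_Icc, nsmul_one]
  rw [show ((n : ℤ) + 1 - -(n : ℤ)).toNat = 2 * n + 1 by omega]
  push_cast; ring

lemma sum_intervalInd_bond_sq (n : ℕ) (lam : ℝ) :
    ∑ t ∈ Finset.Icc (-((n + 1 : ℕ) : ℤ)) ((n + 1 : ℕ) : ℤ),
      (intervalInd n (t + 1) - lam * intervalInd n t) ^ 2 =
        1 + lam ^ 2 + 2 * n * (1 - lam) ^ 2 := by
  set I := Finset.Icc (-((n + 1 : ℕ) : ℤ)) ((n + 1 : ℕ) : ℤ)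
  -- the bond is fully inside `[-n, n]`, enters it from the left, or leaves it on the right
  have pointwise : ∀ t ∈ I, (intervalInd n (t + 1) - lam * intervalInd n t) ^ 2 =
      (if t ∈ Finset.Ico (-(n : ℤ)) n then (1 - lam) ^ 2 else 0) +
        (if t = -((n : ℤ) + 1) then 1 else 0) + (if t = n then lam ^ 2 else 0) := by
    intro t ht
    simp only [I, Finset.mem_Icc] at ht
    simp only [intervalInd, Finset.mem_Icc, Finset.mem_Ico]
    push_cast at ht
    split_ifs <;> first | ring1 | (exfalso; omega)
  have hsub : Finset.Ico (-(n : ℤ)) n ⊆ I := fun t ht => by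
    simp only [I, Finset.mem_Icc, Finset.mem_Ico] at ht ⊢; push_cast; omega
  rw [Finset.sum_congr rfl pointwise, Finset.sum_add_distrib, Finset.sum_add_distrib,
    ← Finset.sum_filter, Finset.filter_mem_eq_inter, Finset.inter_eq_right.mpr hsub,
    Finset.sum_const, Int.card_Ico, Finset.sum_ite_eq', Finset.sum_ite_eq',
    if_pos (by simp only [I, Finset.mem_Icc]; push_cast; omega),
    if_pos (by simp only [I, Finset.mem_Icc]; push_cast; omega),
    show ((n : ℤ) - -(n : ℤ)).toNat = 2 * n by omega, nsmul_eq_mul]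
  push_cast; ring

def boxInd (N : Fin d → ℕ) (x : Site d) : ℝ := if x ∈ box N then 1 else 0

lemma boxInd_eq_prod (N : Fin d → ℕ) (x : Site d) :
    boxInd N x = ∏ j, intervalInd (N j) (x j) := by
  simp only [boxInd, intervalInd, box, Fintype.mem_piFinset, Fintype.prod_boole]
  congr

lemma add_unitVec_eq_update (x : Site d) (k : Fin d) :
    x + unitVec d k = Function.update x k (x k + 1) := by
  funext j
  by_cases hj : j = k
  · subst hj; simp [unitVec]
  · simp [unitVec, hj]

lemma boxInd_bond_sq (N : Fin d → ℕ) (lam : ℝ) (k : Fin d) (x : Site d) :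
    (boxInd N (x + unitVec d k) - lam * boxInd N x) ^ 2 =
      (intervalInd (N k) (x k + 1) - lam * intervalInd (N k) (x k)) ^ 2 *
        ∏ j ∈ Finset.univ.erase k, intervalInd (N j) (x j) := by
  have split_off : ∀ y : Site d, boxInd N y =
      intervalInd (N k) (y k) * ∏ j ∈ Finset.univ.erase k, intervalInd (N j) (y j) := fun y => by
    rw [boxInd_eq_prod, ← Finset.mul_prod_erase _ _ (Finset.mem_univ k)]
  have rest : ∏ j ∈ Finset.univ.erase k, intervalInd (N j) ((x + unitVec d k) j) =
      ∏ j ∈ Finset.univ.erase k, intervalInd (N j) (x j) :=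
    Finset.prod_congr rfl fun j hj => by
      rw [add_unitVec_eq_update, Function.update_of_ne (Finset.ne_of_mem_erase hj)]
  rw [split_off, split_off x, rest, add_unitVec_eq_update, Function.update_self]
  nth_rewrite 3 [← Finset.prod_congr rfl fun j _ => intervalInd_sq (N j) (x j)]
  rw [Finset.prod_pow]
  ring

lemma mem_box_iff (N : Fin d → ℕ) (x : Site d) :
    x ∈ box N ↔ ∀ j, -(N j : ℤ) ≤ x j ∧ x j ≤ N j := by
  simp [box]

lemma box_subset_box_succ (N : Fin d → ℕ) : box N ⊆ box fun j => N j + 1 := fun x hx => by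
  rw [mem_box_iff] at hx ⊢
  intro j; have := hx j; push_cast; omega

lemma add_unitVec_mem_box_succ {N : Fin d → ℕ} {x : Site d} (hx : x ∈ box N) (k : Fin d) :
    x + unitVec d k ∈ box fun j => N j + 1 := by
  rw [mem_box_iff] at hx ⊢
  intro j; have := hx j; simp only [Pi.add_apply, unitVec]; push_cast; split_ifs <;> omega

lemma sum_boxInd (N : Fin d → ℕ) :
    ∑ x ∈ box (fun j => N j + 1), boxInd N x = ∏ j, (2 * (N j : ℝ) + 1) := by
  simp only [boxInd_eq_prod, box, ← Finset.prod_univ_sum, sum_intervalInd]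

lemma sum_boxInd_bond_sq (N : Fin d → ℕ) (lam : ℝ) (k : Fin d) :
    ∑ x ∈ box (fun j => N j + 1), (boxInd N (x + unitVec d k) - lam * boxInd N x) ^ 2 =
      (1 + lam ^ 2 + 2 * N k * (1 - lam) ^ 2) *
        ∏ j ∈ Finset.univ.erase k, (2 * (N j : ℝ) + 1) := by
  simp only [boxInd_bond_sq, box]
  rw [Finset.sum_piFinset_mul_prod_erase _ k
    (fun t => (intervalInd (N k) (t + 1) - lam * intervalInd (N k) t) ^ 2)
    (fun j => intervalInd (N j)), sum_intervalInd_bond_sq]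
  simp only [sum_intervalInd]

lemma boxTrial_eq_oneParticle (N : Fin d → ℕ) :
    boxTrial N = oneParticle (box fun k => N k + 1) fun x => (boxInd N x : ℂ) := by
  ext σ
  refine Finset.sum_congr rfl fun x _ => ?_
  simp only [boxInd]
  split_ifs <;> simp

lemma norm_boxTrial_sq (N : Fin d → ℕ) : ‖boxTrial N‖ ^ 2 = ∏ j, (2 * (N j : ℝ) + 1) := by
  rw [boxTrial_eq_oneParticle, norm_oneParticle_sq, ← sum_boxInd]
  refine Finset.sum_congr rfl fun x _ => ?_
  rw [Complex.norm_real, Real.norm_eq_abs, sq_abs]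
  unfold boxInd; split_ifs <;> norm_num

lemma re_inner_boxTrial_Ham (N : Fin d → ℕ) (lam : Fin d → ℝ) :
    (inner ℂ (boxTrial N) (Ham (box fun k => N k + 1) lam (boxTrial N))).re =
      ∑ k, (1 + lam k ^ 2 + 2 * N k * (1 - lam k) ^ 2) / (1 + lam k ^ 2) *
        ∏ j ∈ Finset.univ.erase k, (2 * (N j : ℝ) + 1) := by
  rw [boxTrial_eq_oneParticle, inner_oneParticle_Ham, Complex.ofReal_re]
  refine Finset.sum_congr rfl fun k _ => ?_
  -- a bond leaving the enlarged box starts outside `box N`, so it carries no energy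
  have drop_guard : ∀ x ∈ box fun j => N j + 1,
      (if x + unitVec d k ∈ box (fun j => N j + 1) then
        ‖(boxInd N (x + unitVec d k) : ℂ) - lam k * boxInd N x‖ ^ 2 / (1 + lam k ^ 2) else 0) =
      (boxInd N (x + unitVec d k) - lam k * boxInd N x) ^ 2 / (1 + lam k ^ 2) := by
    intro x _
    rw [← Complex.ofReal_mul, ← Complex.ofReal_sub, Complex.norm_real, Real.norm_eq_abs, sq_abs]
    split_ifs with h
    · rfl
    · have hx : x ∉ box N := fun hx => h (add_unitVec_mem_box_succ hx k)
      have hxk : x + unitVec d k ∉ box N := fun hxk => h (box_subset_box_succ N hxk)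
      simp [boxInd, hx, hxk]
  rw [Finset.sum_congr rfl drop_guard, ← Finset.sum_div, sum_boxInd_bond_sq]
  ring

lemma rayleigh_boxTrial (N : Fin d → ℕ) (lam : Fin d → ℝ) :
    (inner ℂ (boxTrial N) (Ham (box fun k => N k + 1) lam (boxTrial N))).re /
        ‖boxTrial N‖ ^ 2 =
      ∑ k, ((1 - lam k) ^ 2 / (1 + lam k ^ 2) * (2 * N k / (2 * N k + 1)) +
        1 / (2 * (N k : ℝ) + 1)) := by
  rw [re_inner_boxTrial_Ham, norm_boxTrial_sq, Finset.sum_div]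
  refine Finset.sum_congr rfl fun k _ => ?_
  rw [← Finset.mul_prod_erase _ _ (Finset.mem_univ k)]
  field_simp
  ring

end Box

theorem pvbs_bulk_variational_bound_general {d : ℕ} (N : Fin d → ℕ) (lam : Fin d → ℝ) :
    (inner ℂ (boxTrial N) (Ham (box (fun k => N k + 1)) lam (boxTrial N)) : ℂ).re /
        ‖boxTrial N‖ ^ 2 ≤
      (∑ k ∈ Finset.univ.filter (fun k : Fin d => lam k ≠ 1),
          (1 - lam k) ^ 2 / (1 + (lam k) ^ 2)) +
      ∑ k : Fin d, 1 / (2 * (N k : ℝ) + 1) := by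
  have drop_filter := Finset.sum_filter_of_ne (s := Finset.univ) (p := fun k => lam k ≠ 1)
    (f := fun k => (1 - lam k) ^ 2 / (1 + lam k ^ 2)) fun k _ hk hk1 => hk (by rw [hk1]; ring)
  rw [rayleigh_boxTrial, drop_filter, ← Finset.sum_add_distrib]
  gcongr with k
  exact mul_le_of_le_one_right (by positivity) (div_le_one_of_le₀ (by linarith) (by positivity))

/-- variational upper bound for the bulk gap.  With `φ = ∑_{x∈Λ_N} ξ_{{x}}`,
`⟨φ, H_{Λ_N^{(1)}} φ⟩/‖φ‖² ≤ ∑_{k : λ_k≠1} (1−λ_k)²/(1+λ_k²) + ∑_k 1/(2N_k+1)`. -/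
theorem pvbs_bulk_variational_bound {d : ℕ} (N : Fin d → ℕ) (lam : Fin d → ℝ)
    (hlam : ∀ k, 0 < lam k) :
    (inner ℂ (boxTrial N) (Ham (box (fun k => N k + 1)) lam (boxTrial N)) : ℂ).re /
        ‖boxTrial N‖ ^ 2 ≤
      (∑ k ∈ Finset.univ.filter (fun k : Fin d => lam k ≠ 1),
          (1 - lam k) ^ 2 / (1 + (lam k) ^ 2)) +
      ∑ k : Fin d, 1 / (2 * (N k : ℝ) + 1) :=
  pvbs_bulk_variational_bound_general N lam

end
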